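/- arXiv:2210.04931 — 2 statements merged into one kernel-verified Lean document; each statement's English description precedes it below -/
import Mathlib

section
/- For every n = 0, 1, 2, …, (n+2) ∫₀^∞ h(v)^{n+1} dv ≥ α^{n+2}; equivalently, b_n ≥ 2/(1 + γ_s²) where b_n = 2(n+2) ∫₀^∞ h(v)^{n+1} dv / (α^{n+2}(1 + γ_s²)). (The lower estimate on Sathe's coefficients b_n, which yields the lower bound of formula (1.3); it follows since h is convex with h(0) = α and h'(t) ≥ −1, so h(t) ≥ max(α − t, 0).) -/
open MeasureTheory Real Set Filter
open scoped ENNReal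

/-! Since `1 - G` takes values in `[0, 1]`, the integrated tail `h` is nonincreasing with
`h 0 = α` and slope at least `-1`, so `h t ≥ α - t` on `[0, α]`; integrating `(α - t) ^ (n + 1)`
over `[0, α]` gives `α ^ (n + 2) / (n + 2)`. By Tonelli `μ₂ = 2 ∫₀^∞ h`, so the case `n = 0`
gives `μ₂ ≥ α² > 0`; as `1 + γ_s² = μ₂ / α²`, the bound on `b n` is the first inequality
divided by `α ^ (n + 2)`. -/

theorem lintegral_Ioi_lintegral_Ioi {g : ℝ → ℝ≥0∞} (hg : Measurable g) (a : ℝ) :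
    ∫⁻ t in Ioi a, ∫⁻ v in Ioi t, g v = ∫⁻ v in Ioi a, ENNReal.ofReal (v - a) * g v := by
  have hmeas : Measurable (Function.uncurry fun t v : ℝ => (Ioi t).indicator g v) :=
    (hg.comp measurable_snd).indicator (measurableSet_lt measurable_fst measurable_snd)
  calc ∫⁻ t in Ioi a, ∫⁻ v in Ioi t, g v
      = ∫⁻ t in Ioi a, ∫⁻ v in Ioi a, (Ioi t).indicator g v := by
        refine setLIntegral_congr_fun measurableSet_Ioi fun t ht => ?_
        rw [lintegral_indicator measurableSet_Ioi, Measure.restrict_restrict measurableSet_Ioi,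
          Ioi_inter_Ioi, sup_eq_left.2 (le_of_lt ht)]
    _ = ∫⁻ v in Ioi a, ∫⁻ t in Ioi a, (Ioi t).indicator g v :=
        lintegral_lintegral_swap hmeas.aemeasurable
    _ = ∫⁻ v in Ioi a, ENNReal.ofReal (v - a) * g v := by
        refine setLIntegral_congr_fun measurableSet_Ioi fun v _ => ?_
        have hind : ∀ t, (Ioi t).indicator g v = (Iio v).indicator (fun _ => g v) t := fun t => by
          by_cases htv : t < v <;> simp [indicator, htv]
        simp_rw [hind]
        rw [lintegral_indicator measurableSet_Iio, setLIntegral_const,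
          Measure.restrict_apply measurableSet_Iio, Iio_inter_Ioi, Real.volume_Ioo, mul_comm]

section TailIntegral

variable {f : ℝ → ℝ}

theorem antitoneOn_integral_Ioi (hf₀ : ∀ v, 0 ≤ f v) (hf : IntegrableOn f (Ioi 0)) :
    AntitoneOn (fun t => ∫ v in Ioi t, f v) (Ici 0) := fun _ hs _ _ hst =>
  setIntegral_mono_set (hf.mono_set (Ioi_subset_Ioi hs)) (ae_of_all _ hf₀)
    (Ioi_subset_Ioi hst).eventuallyLE

theorem lintegral_ofReal_integral_Ioi (hf : Measurable f) (hf₀ : ∀ v, 0 ≤ f v)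
    (hfi : IntegrableOn f (Ioi 0)) :
    ∫⁻ t in Ioi 0, ENNReal.ofReal (∫ v in Ioi t, f v) =
      ∫⁻ v in Ioi 0, ENNReal.ofReal (v * f v) := by
  calc ∫⁻ t in Ioi 0, ENNReal.ofReal (∫ v in Ioi t, f v)
      = ∫⁻ t in Ioi 0, ∫⁻ v in Ioi t, ENNReal.ofReal (f v) :=
        setLIntegral_congr_fun measurableSet_Ioi fun t ht =>
          ofReal_integral_eq_lintegral_ofReal (hfi.mono_set (Ioi_subset_Ioi (le_of_lt ht)))
            (ae_of_all _ hf₀)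
    _ = ∫⁻ v in Ioi 0, ENNReal.ofReal (v * f v) := by
        rw [lintegral_Ioi_lintegral_Ioi hf.ennreal_ofReal]
        refine setLIntegral_congr_fun measurableSet_Ioi fun v hv => ?_
        rw [sub_zero, ENNReal.ofReal_mul (le_of_lt hv)]

theorem integrableOn_integral_Ioi (hf : Measurable f) (hf₀ : ∀ v, 0 ≤ f v)
    (hfi : IntegrableOn f (Ioi 0)) (hvf : IntegrableOn (fun v => v * f v) (Ioi 0)) :
    IntegrableOn (fun t => ∫ v in Ioi t, f v) (Ioi 0) := by
  refine ⟨(aemeasurable_restrict_of_antitoneOn measurableSet_Ioi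
    ((antitoneOn_integral_Ioi hf₀ hfi).mono Ioi_subset_Ici_self)).aestronglyMeasurable, ?_⟩
  rw [hasFiniteIntegral_iff_ofReal (ae_of_all _ fun t => integral_nonneg fun v => hf₀ v),
    lintegral_ofReal_integral_Ioi hf hf₀ hfi]
  exact hvf.lintegral_lt_top

theorem integral_integral_Ioi (hf : Measurable f) (hf₀ : ∀ v, 0 ≤ f v)
    (hfi : IntegrableOn f (Ioi 0)) (hvf : IntegrableOn (fun v => v * f v) (Ioi 0)) :
    ∫ t in Ioi 0, ∫ v in Ioi t, f v = ∫ v in Ioi 0, v * f v := by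
  have htail₀ (t : ℝ) : 0 ≤ ∫ v in Ioi t, f v := integral_nonneg fun v => hf₀ v
  have hvf₀ : 0 ≤ᵐ[volume.restrict (Ioi 0)] fun v => v * f v := by
    filter_upwards [ae_restrict_mem measurableSet_Ioi] with v hv
    exact mul_nonneg (le_of_lt hv) (hf₀ v)
  rw [← ENNReal.ofReal_eq_ofReal_iff (integral_nonneg htail₀) (integral_nonneg_of_ae hvf₀),
    ofReal_integral_eq_lintegral_ofReal (integrableOn_integral_Ioi hf hf₀ hfi hvf)
      (ae_of_all _ htail₀),
    ofReal_integral_eq_lintegral_ofReal hvf hvf₀, lintegral_ofReal_integral_Ioi hf hf₀ hfi]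

theorem sub_le_integral_Ioi (hf₁ : ∀ v, f v ≤ 1) (hfi : IntegrableOn f (Ioi 0)) {t : ℝ}
    (ht : 0 ≤ t) :
    (∫ v in Ioi 0, f v) - t ≤ ∫ v in Ioi t, f v := by
  have hsplit : ∫ v in Ioi 0, f v = (∫ v in Ioc 0 t, f v) + ∫ v in Ioi t, f v := by
    rw [← setIntegral_union (Ioc_disjoint_Ioi le_rfl) measurableSet_Ioi
      (hfi.mono_set Ioc_subset_Ioi_self) (hfi.mono_set (Ioi_subset_Ioi ht)),
      Ioc_union_Ioi_eq_Ioi ht]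
  have hhead : ∫ v in Ioc 0 t, f v ≤ t := by
    calc ∫ v in Ioc 0 t, f v ≤ ∫ _ in Ioc 0 t, (1 : ℝ) :=
          setIntegral_mono_on (hfi.mono_set Ioc_subset_Ioi_self)
            (integrableOn_const measure_Ioc_lt_top.ne) measurableSet_Ioc fun v _ => hf₁ v
      _ = t := by simp [ht]
  linarith

end TailIntegral

theorem integrableOn_pow_succ_of_le {H : ℝ → ℝ} {s : Set ℝ} {c : ℝ} (hs : MeasurableSet s)
    (hH : IntegrableOn H s) (hH₀ : ∀ v ∈ s, 0 ≤ H v) (hHc : ∀ v ∈ s, H v ≤ c) (n : ℕ) :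
    IntegrableOn (fun v => H v ^ (n + 1)) s := by
  simp_rw [pow_succ]
  refine hH.bdd_mul (c := c ^ n) (hH.aestronglyMeasurable.pow n) ?_
  filter_upwards [ae_restrict_mem hs] with v hv
  rw [norm_pow, Real.norm_of_nonneg (hH₀ v hv)]
  exact pow_le_pow_left₀ (hH₀ v hv) (hHc v hv) n

theorem pow_le_mul_setIntegral_pow_of_sub_le {H : ℝ → ℝ} {α : ℝ} (hα : 0 ≤ α) (n : ℕ)
    (hH₀ : ∀ v, 0 ≤ H v) (hHi : IntegrableOn (fun v => H v ^ (n + 1)) (Ioi 0))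
    (hH : ∀ v ∈ Ioc 0 α, α - v ≤ H v) :
    α ^ (n + 2) ≤ ((n : ℝ) + 2) * ∫ v in Ioi 0, H v ^ (n + 1) := by
  have hval : ∫ v in Ioc 0 α, (α - v) ^ (n + 1) = α ^ (n + 2) / ((n : ℝ) + 2) := by
    rw [← intervalIntegral.integral_of_le hα, intervalIntegral.integral_comp_sub_left
      (fun x => x ^ (n + 1)), sub_self, sub_zero, integral_pow]
    push_cast
    ring
  rw [← div_le_iff₀' (by positivity), ← hval]
  calc ∫ v in Ioc 0 α, (α - v) ^ (n + 1) ≤ ∫ v in Ioc 0 α, H v ^ (n + 1) :=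
        setIntegral_mono_on
          ((by fun_prop : Continuous fun v => (α - v) ^ (n + 1)).integrableOn_Ioc)
          (hHi.mono_set Ioc_subset_Ioi_self) measurableSet_Ioc
          fun v hv => pow_le_pow_left₀ (by linarith [hv.2]) (hH v hv) _
    _ ≤ ∫ v in Ioi 0, H v ^ (n + 1) :=
        setIntegral_mono_set hHi (ae_of_all _ fun v => pow_nonneg (hH₀ v) _)
          Ioc_subset_Ioi_self.eventuallyLE

theorem sathe_coefficients_lower_estimate_general
    (G : ℝ → ℝ)
    (hmono : Monotone G)
    (hneg : ∀ v : ℝ, v < 0 → G v = 0)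
    (hlim : Tendsto G atTop (nhds 1))
    (α μ₂ γ2 : ℝ)
    (hInt1 : IntegrableOn (fun v => 1 - G v) (Ioi 0))
    (hα : α = ∫ v in Ioi (0:ℝ), (1 - G v))
    (hαpos : 0 < α)
    (hInt2 : IntegrableOn (fun v => v * (1 - G v)) (Ioi 0))
    (hμ₂ : μ₂ = 2 * ∫ v in Ioi (0:ℝ), v * (1 - G v))
    (hγ : γ2 = μ₂ / α ^ 2 - 1)
    (h : ℝ → ℝ)
    (hh : ∀ t : ℝ, h t = ∫ v in Ioi t, (1 - G v))
    (b : ℕ → ℝ)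
    (hb : ∀ n : ℕ, b n =
      2 * (n + 2) * (∫ v in Ioi (0:ℝ), (h v) ^ (n + 1)) / (α ^ (n + 2) * (1 + γ2))) :
    ∀ n : ℕ,
      α ^ (n + 2) ≤ ((n : ℝ) + 2) * (∫ v in Ioi (0:ℝ), (h v) ^ (n + 1)) ∧ 2 / (1 + γ2) ≤ b n := by
  have hG_le_one (v : ℝ) : G v ≤ 1 := hmono.ge_of_tendsto hlim v
  have hG_nonneg (v : ℝ) : 0 ≤ G v :=
    (hneg (min v (-1)) (by simp)).symm.le.trans (hmono (min_le_left v (-1)))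
  have hf₀ (v : ℝ) : 0 ≤ 1 - G v := sub_nonneg.2 (hG_le_one v)
  have hf₁ (v : ℝ) : 1 - G v ≤ 1 := sub_le_self 1 (hG_nonneg v)
  have hfm : Measurable fun v => 1 - G v := measurable_const.sub hmono.measurable
  have hh₀ (t : ℝ) : 0 ≤ h t := hh t ▸ integral_nonneg fun v => hf₀ v
  have hh_le (t : ℝ) (ht : t ∈ Ioi (0 : ℝ)) : h t ≤ α := hh t ▸ hα ▸
    antitoneOn_integral_Ioi hf₀ hInt1 self_mem_Ici (mem_Ici.2 (le_of_lt ht)) (le_of_lt ht)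
  have hh_int : IntegrableOn h (Ioi 0) := by
    rw [funext hh]; exact integrableOn_integral_Ioi hfm hf₀ hInt1 hInt2
  have key (n : ℕ) : α ^ (n + 2) ≤ ((n : ℝ) + 2) * ∫ v in Ioi 0, h v ^ (n + 1) :=
    pow_le_mul_setIntegral_pow_of_sub_le hαpos.le n hh₀
      (integrableOn_pow_succ_of_le measurableSet_Ioi hh_int (fun t _ => hh₀ t) hh_le n)
      fun t ht => hh t ▸ hα ▸ sub_le_integral_Ioi hf₁ hInt1 ht.1.le
  have hμ₂_eq : μ₂ = 2 * ∫ t in Ioi 0, h t := by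
    rw [hμ₂, funext hh, integral_integral_Ioi hfm hf₀ hInt1 hInt2]
  have hγ_pos : 0 < 1 + γ2 := by
    have hμ₂_pos : 0 < μ₂ := (pow_pos hαpos 2).trans_le (by simpa [hμ₂_eq] using key 0)
    rw [hγ, add_sub_cancel]
    exact div_pos hμ₂_pos (by positivity)
  intro n
  refine ⟨key n, ?_⟩
  calc 2 / (1 + γ2) = 2 / (1 + γ2) * 1 := (mul_one _).symm
    _ ≤ 2 / (1 + γ2) * (((n : ℝ) + 2) * (∫ v in Ioi 0, h v ^ (n + 1)) / α ^ (n + 2)) := by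
        gcongr
        exact (one_le_div (by positivity)).2 (key n)
    _ = b n := by
        rw [hb]
        field_simp

/-- Lower estimate on Sathe's coefficients: for every `n`,
`(n+2) ∫₀^∞ h(v)^{n+1} dv ≥ α^{n+2}`, equivalently `b_n ≥ 2/(1+γ_s²)`. -/
theorem sathe_coefficients_lower_estimate
    (G : ℝ → ℝ)
    (hmono : Monotone G)
    (hrc : ∀ v : ℝ, ContinuousWithinAt G (Set.Ici v) v)
    (hneg : ∀ v : ℝ, v < 0 → G v = 0)
    (hlim : Tendsto G atTop (nhds 1))
    (α μ₂ γ2 : ℝ)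
    (hInt1 : IntegrableOn (fun v => 1 - G v) (Ioi 0))
    (hα : α = ∫ v in Ioi (0:ℝ), (1 - G v))
    (hαpos : 0 < α)
    (hInt2 : IntegrableOn (fun v => v * (1 - G v)) (Ioi 0))
    (hμ₂ : μ₂ = 2 * ∫ v in Ioi (0:ℝ), v * (1 - G v))
    (hγ : γ2 = μ₂ / α ^ 2 - 1)
    (h : ℝ → ℝ)
    (hh : ∀ t : ℝ, h t = ∫ v in Ioi t, (1 - G v))
    (b : ℕ → ℝ)
    (hb : ∀ n : ℕ, b n =
      2 * (n + 2) * (∫ v in Ioi (0:ℝ), (h v) ^ (n + 1)) / (α ^ (n + 2) * (1 + γ2))) :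
    ∀ n : ℕ,
      α ^ (n + 2) ≤ ((n : ℝ) + 2) * (∫ v in Ioi (0:ℝ), (h v) ^ (n + 1)) ∧ 2 / (1 + γ2) ≤ b n :=
  sathe_coefficients_lower_estimate_general G hmono hneg hlim α μ₂ γ2 hInt1 hα hαpos hInt2 hμ₂ hγ h
    hh b hb
end

section
/- If G is NWUE with mean α, i.e. ∫₀^∞ (1 − G(v)) dv = α and ∫_t^∞ (1 − G(v)) dv ≥ α(1 − G(t)) for all t ≥ 0, and V(G) is finite, then V(G) ≥ V(G^M), where G^M(v) = 1 − e^{−v/α} is the exponential distribution function with mean α. (This is formula (1.9): with NWUE service times the M/G/∞ busy period variance is at least the M/M/∞ one.) -/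
open MeasureTheory Real Set Filter

/-! The integrated tail `h t = ∫_t^∞ (1 - G)` has right derivative `-(1 - G t)`, so the NWUE
condition reads `α h' + h ≥ 0`. Grönwall's inequality then gives `h t ≥ α e^{-t/α}`, which is
exactly the integrated tail of the exponential distribution with mean `α`; the variance formula is
increasing in the integrated tail. -/

theorem hasDerivWithinAt_integral_Ioi {f : ℝ → ℝ} {a t : ℝ} (hf : IntegrableOn f (Ioi a))
    (hat : a ≤ t) (hft : ContinuousWithinAt f (Ici t) t) :
    HasDerivWithinAt (fun s => ∫ v in Ioi s, f v) (-f t) (Ici t) t := by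
  have hsplit : ∀ s ∈ Ici t, ∫ v in Ioi s, f v = (∫ v in Ioi a, f v) - ∫ v in a..s, f v :=
    fun s hs => by rw [← intervalIntegral.integral_Ioi_sub_Ioi hf (hat.trans hs), sub_sub_cancel]
  have hftc : HasDerivWithinAt (fun s => ∫ v in a..s, f v) (f t) (Ici t) t :=
    intervalIntegral.integral_hasDerivWithinAt_right (t := Ioi t)
      ((intervalIntegrable_iff_integrableOn_Ioc_of_le hat).2 (hf.mono_set Ioc_subset_Ioi_self))
      ⟨Ioi t, self_mem_nhdsWithin, (hf.mono_set (Ioi_subset_Ioi hat)).aestronglyMeasurable⟩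
      (hft.mono Ioi_subset_Ici_self)
  exact (hftc.const_sub _).congr hsplit (hsplit t self_mem_Ici)

theorem mul_exp_le_of_mul_le_deriv_right {h h' : ℝ → ℝ} {K a b x : ℝ}
    (hc : ContinuousOn h (Icc a b)) (hd : ∀ x ∈ Ico a b, HasDerivWithinAt h (h' x) (Ici x) x)
    (bound : ∀ x ∈ Ico a b, K * h x ≤ h' x) (hx : x ∈ Icc a b) :
    h a * exp (K * (x - a)) ≤ h x := by
  have := le_gronwallBound_of_liminf_deriv_right_le (f := fun x => -h x) (f' := fun x => -h' x)
    (δ := -h a) (ε := 0) hc.neg (fun x hx _ hr => (hd x hx).neg.liminf_right_slope_le hr) le_rfl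
    (fun x hx => by linarith [bound x hx]) x hx
  rw [gronwallBound_ε0] at this
  linarith

theorem mul_exp_neg_div_le_integral_Ioi_of_nwue {f : ℝ → ℝ} {α t : ℝ} (hα : 0 < α)
    (hf : IntegrableOn f (Ioi 0)) (hrc : ∀ s, 0 ≤ s → ContinuousWithinAt f (Ici s) s)
    (hnwue : ∀ s, 0 ≤ s → α * f s ≤ ∫ v in Ioi s, f v) (ht : 0 ≤ t) :
    (∫ v in Ioi 0, f v) * exp (-t / α) ≤ ∫ v in Ioi t, f v := by
  have := mul_exp_le_of_mul_le_deriv_right (K := -α⁻¹) (h' := fun s => -f s)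
    (hf.continuousOn_Ici_primitive_Ioi.mono Icc_subset_Ici_self)
    (fun s hs => hasDerivWithinAt_integral_Ioi hf hs.1 (hrc s hs.1))
    (fun s hs => by rw [neg_mul, neg_le_neg_iff, le_inv_mul_iff₀ hα]; exact hnwue s hs.1)
    (right_mem_Icc.2 ht)
  convert this using 3
  ring

theorem integral_Ioi_exp_neg_div {α : ℝ} (hα : 0 < α) (t : ℝ) :
    ∫ v in Ioi t, exp (-v / α) = α * exp (-t / α) := by
  have hlin : ∀ x, -x / α = -α⁻¹ * x := fun x => by ring
  simp_rw [hlin]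
  rw [integral_exp_mul_Ioi (neg_lt_zero.2 (inv_pos.2 hα))]
  field_simp

theorem nwue_busy_period_variance_ge_exponential_general
    (G : ℝ → ℝ)
    (hrc : ∀ v : ℝ, ContinuousWithinAt G (Set.Ici v) v)
    (lam α ρ : ℝ)
    (hlam : 0 < lam)
    (hInt : IntegrableOn (fun v => 1 - G v) (Ioi 0))
    (hα : α = ∫ v in Ioi (0:ℝ), (1 - G v))
    (hαpos : 0 < α)
    (hNWUE : ∀ t : ℝ, 0 ≤ t → α * (1 - G t) ≤ ∫ v in Ioi t, (1 - G v))
    (hfin : IntegrableOn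
      (fun t => exp (lam * ∫ v in Ioi t, (1 - G v)) - 1) (Ioi 0))
    (GM : ℝ → ℝ)
    (hGM : ∀ v : ℝ, 0 ≤ v → GM v = 1 - exp (-v / α)) :
    (2 * exp ρ / lam) * (∫ t in Ioi (0:ℝ), (exp (lam * ∫ v in Ioi t, (1 - GM v)) - 1))
        - ((exp ρ - 1) / lam) ^ 2
      ≤ (2 * exp ρ / lam) * (∫ t in Ioi (0:ℝ), (exp (lam * ∫ v in Ioi t, (1 - G v)) - 1))
        - ((exp ρ - 1) / lam) ^ 2 := by
  have hGM_tail : ∀ t, 0 ≤ t → ∫ v in Ioi t, (1 - GM v) = α * exp (-t / α) := fun t ht => by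
    rw [← integral_Ioi_exp_neg_div hαpos t]
    refine setIntegral_congr_fun measurableSet_Ioi fun v hv => ?_
    rw [hGM v (ht.trans (le_of_lt hv)), sub_sub_cancel]
  have hG_tail : ∀ t, 0 ≤ t → α * exp (-t / α) ≤ ∫ v in Ioi t, (1 - G v) := fun t ht => by
    simpa only [← hα] using mul_exp_neg_div_le_integral_Ioi_of_nwue hαpos hInt
      (fun s _ => continuousWithinAt_const.sub (hrc s)) hNWUE ht
  have hint : ∫ t in Ioi (0:ℝ), (exp (lam * ∫ v in Ioi t, (1 - GM v)) - 1)
      ≤ ∫ t in Ioi (0:ℝ), (exp (lam * ∫ v in Ioi t, (1 - G v)) - 1) := by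
    refine integral_mono_of_nonneg ?_ hfin ?_ <;>
      filter_upwards [ae_restrict_mem measurableSet_Ioi] with t (ht : 0 < t) <;>
      rw [hGM_tail t ht.le]
    · exact sub_nonneg.2 (one_le_exp (by positivity))
    · gcongr
      exact hG_tail t ht.le
  gcongr

/-- Formula (1.9): with NWUE service times, if the M/G/∞ busy period variance is finite,
it is at least the M/M/∞ one, `V(G) ≥ V(G^M)` where `G^M` is exponential with mean `α`. -/
theorem nwue_busy_period_variance_ge_exponential
    (G : ℝ → ℝ)
    (hmono : Monotone G)
    (hrc : ∀ v : ℝ, ContinuousWithinAt G (Set.Ici v) v)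
    (hneg : ∀ v : ℝ, v < 0 → G v = 0)
    (hlim : Tendsto G atTop (nhds 1))
    (lam α ρ : ℝ)
    (hlam : 0 < lam)
    (hInt : IntegrableOn (fun v => 1 - G v) (Ioi 0))
    (hα : α = ∫ v in Ioi (0:ℝ), (1 - G v))
    (hαpos : 0 < α)
    (hρ : ρ = lam * α)
    (hNWUE : ∀ t : ℝ, 0 ≤ t → α * (1 - G t) ≤ ∫ v in Ioi t, (1 - G v))
    (hfin : IntegrableOn
      (fun t => exp (lam * ∫ v in Ioi t, (1 - G v)) - 1) (Ioi 0))
    (GM : ℝ → ℝ)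
    (hGM : ∀ v : ℝ, 0 ≤ v → GM v = 1 - exp (-v / α))
    (hGMneg : ∀ v : ℝ, v < 0 → GM v = 0) :
    (2 * exp ρ / lam) * (∫ t in Ioi (0:ℝ), (exp (lam * ∫ v in Ioi t, (1 - GM v)) - 1))
        - ((exp ρ - 1) / lam) ^ 2
      ≤ (2 * exp ρ / lam) * (∫ t in Ioi (0:ℝ), (exp (lam * ∫ v in Ioi t, (1 - G v)) - 1))
        - ((exp ρ - 1) / lam) ^ 2 :=
  nwue_busy_period_variance_ge_exponential_general G hrc lam α ρ hlam hInt hα hαpos hNWUE hfin GM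
    hGM
end
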